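/- Let $P$ and $Q$ be distributions on $\mathcal{X} \times \{1, \dots, K\}$ satisfying label shift ($P(x \mid y) = Q(x \mid y)$), and let $h: \mathcal{X} \to \{1, \dots, K\}$ be any classifier with $\widehat{Y} = h(X)$. Define the confusion matrix $\mathbf{C} \in \mathbb{R}^{K \times K}$ by $\mathbf{C}_{ij} = P(\widehat{Y} = i, Y = j)$, the test prediction frequencies $\mu_j = Q(\widehat{Y} = j)$, and the weight vector $\tilde{w} \in \mathbb{R}^K$ with $\tilde{w}_j = Q(Y = j)/P(Y = j)$ (assuming $P(Y=j) > 0$ for all $j$). Then $\mu = \mathbf{C} \tilde{w}$; in particular, if $\mathbf{C}$ is invertible, $\tilde{w} = \mathbf{C}^{-1}\mu$. -/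
import Mathlib


open MeasureTheory Finset

/-- Population identity underlying BBSE: under label shift, the test prediction
frequencies satisfy `μ = C ŵ`, where `C_{ij} = P(Ŷ = i, Y = j)` is the confusion
matrix of a classifier `h` and `ŵ_j = Q(Y=j)/P(Y=j)`; if `C` is invertible then
`ŵ = C⁻¹ μ`. -/
theorem stmt_6 {X : Type*} [MeasurableSpace X] (K : ℕ)
    (P Q : Measure (X × Fin K)) [IsProbabilityMeasure P] [IsProbabilityMeasure Q]
    (hpos : ∀ j : Fin K, 0 < P (Set.univ ×ˢ {j}))
    (hshift : ∀ (A : Set X), MeasurableSet A → ∀ j : Fin K,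
      P (A ×ˢ {j}) * Q (Set.univ ×ˢ {j}) = Q (A ×ˢ {j}) * P (Set.univ ×ˢ {j}))
    (h : X → Fin K) (hmeas : Measurable h)
    (C : Matrix (Fin K) (Fin K) ℝ)
    (hC : ∀ i j, C i j = (P ({x | h x = i} ×ˢ {j})).toReal)
    (μ : Fin K → ℝ) (hμ : ∀ j, μ j = (Q ({x | h x = j} ×ˢ Set.univ)).toReal)
    (w : Fin K → ℝ)
    (hw : ∀ j, w j = (Q (Set.univ ×ˢ {j})).toReal / (P (Set.univ ×ˢ {j})).toReal) :
    μ = C.mulVec w ∧ (IsUnit C.det → w = C⁻¹.mulVec μ) := by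
  have hmain : μ = C.mulVec w := by
    funext i
    have hA : MeasurableSet {x | h x = i} := hmeas (MeasurableSet.singleton i)
    -- each term
    have hterm : ∀ j, C i j * w j = (Q ({x | h x = i} ×ˢ {j})).toReal := by
      intro j
      have hs := hshift {x | h x = i} hA j
      have hPfin : ∀ (M : Measure (X × Fin K)) [IsProbabilityMeasure M] (s : Set (X × Fin K)),
          M s ≠ ⊤ := fun M _ s => measure_ne_top M s
      have hPj : (P (Set.univ ×ˢ {j})).toReal ≠ 0 :=
        ENNReal.toReal_ne_zero.mpr ⟨(hpos j).ne', measure_ne_top P _⟩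
      have hs' : (P ({x | h x = i} ×ˢ {j})).toReal * (Q (Set.univ ×ˢ {j})).toReal
          = (Q ({x | h x = i} ×ˢ {j})).toReal * (P (Set.univ ×ˢ {j})).toReal := by
        rw [← ENNReal.toReal_mul, ← ENNReal.toReal_mul, hs]
      rw [hC, hw, ← mul_div_assoc, div_eq_iff hPj]
      exact hs'
    have hsplit : {x | h x = i} ×ˢ (Set.univ : Set (Fin K))
        = ⋃ j : Fin K, {x | h x = i} ×ˢ ({j} : Set (Fin K)) := by
      ext ⟨x, y⟩
      simp only [Set.mem_prod, Set.mem_setOf_eq, Set.mem_univ, and_true, Set.mem_iUnion,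
        Set.mem_singleton_iff]
      exact ⟨fun hh => ⟨y, hh, rfl⟩, fun ⟨_, hh, _⟩ => hh⟩
    have hmeasQ : Q ({x | h x = i} ×ˢ (Set.univ : Set (Fin K)))
        = ∑ j : Fin K, Q ({x | h x = i} ×ˢ ({j} : Set (Fin K))) := by
      rw [hsplit, measure_iUnion, tsum_fintype]
      · intro a b hab
        simp only [Set.disjoint_left]
        rintro ⟨x, y⟩ ⟨_, hy⟩ ⟨_, hy'⟩
        simp only [Set.mem_singleton_iff] at hy hy'
        exact hab (hy ▸ hy')
      · exact fun j => hA.prod (measurableSet_singleton j)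
    rw [hμ, Matrix.mulVec, dotProduct, hmeasQ, ENNReal.toReal_sum
      (fun j _ => measure_ne_top Q _)]
    exact Finset.sum_congr rfl fun j _ => (hterm j).symm
  exact ⟨hmain, fun hu => by
    rw [hmain, Matrix.mulVec_mulVec, Matrix.nonsing_inv_mul C hu, Matrix.one_mulVec]⟩
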